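/- arXiv:2504.21576 — 4 statements merged into one kernel-verified Lean document; each statement's English description precedes it below -/
import Mathlib

section
/- Let X and Y be identically distributed random variables under upper expectations (𝔼₁[φ(X)] = 𝔼₂[φ(Y)] for all bounded Lipschitz φ). Then the Choquet integrals agree: C_{𝕍₁}(X) = C_{𝕍₂}(Y), where C_𝕍(Z) = ∫₀^∞ 𝕍(Z ≥ t) dt + ∫_{−∞}^0 [𝕍(Z ≥ t) − 1] dt. -/
open MeasureTheory Set Filter

/-!
The ramp `φ = ramp s t`, rising linearly from `0` at `s` to `1` at `t`, is bounded and Lipschitz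
with `𝟙[t, ∞) ≤ φ ≤ 𝟙[s, ∞)`. Taking upper expectations of `φ(X)` and `φ(Y)` therefore gives, for
`s < t`, the sandwich `𝕍₁(X ≥ t) ≤ 𝕍₂(Y ≥ s)`, and symmetrically. This forces both survival
functions to be non-increasing, and at each of their common continuity points (all but countably
many `t`) letting `s ↑ t` shows that they agree, so their integrals coincide.
-/

/-- On `ℝ` an empty supremum is `0`, hence the nonnegative bound `B`. -/
lemma Real.biSup_mono {ι : Type*} {s : Set ι} {f g : ι → ℝ} {B : ℝ} (hB : 0 ≤ B)
    (hgB : ∀ i ∈ s, g i ≤ B) (hfg : ∀ i ∈ s, f i ≤ g i) :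
    ⨆ i ∈ s, f i ≤ ⨆ i ∈ s, g i :=
  ciSup_mono ⟨B, forall_mem_range.2 fun i => Real.iSup_le (hgB i) hB⟩
    fun i => ciSup_mono (finite_range _).bddAbove (hfg i)

lemma antitone_of_forall_lt_le {f g : ℝ → ℝ} (hfg : ∀ ⦃s t⦄, s < t → f t ≤ g s)
    (hgf : ∀ ⦃s t⦄, s < t → g t ≤ f s) : Antitone f := by
  intro a b hab
  rcases hab.eq_or_lt with rfl | hlt
  · exact le_rfl
  · obtain ⟨c, hac, hcb⟩ := exists_between hlt
    exact (hfg hcb).trans (hgf hac)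

lemma le_of_forall_lt_le_of_continuousAt {f g : ℝ → ℝ} {t : ℝ} (hfg : ∀ ⦃s t⦄, s < t → f t ≤ g s)
    (hg : ContinuousAt g t) : f t ≤ g t :=
  ge_of_tendsto (hg.continuousWithinAt (s := Iio t))
    (eventually_nhdsWithin_of_forall fun _ hs => hfg hs)

theorem ae_eq_of_forall_lt_le {f g : ℝ → ℝ} (hfg : ∀ ⦃s t⦄, s < t → f t ≤ g s)
    (hgf : ∀ ⦃s t⦄, s < t → g t ≤ f s) : f =ᵐ[volume] g := by
  filter_upwards [(antitone_of_forall_lt_le hfg hgf).countable_not_continuousAt.ae_notMem volume,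
    (antitone_of_forall_lt_le hgf hfg).countable_not_continuousAt.ae_notMem volume]
    with t hf hg
  simp only [not_not] at hf hg
  exact le_antisymm (le_of_forall_lt_le_of_continuousAt hfg hg)
    (le_of_forall_lt_le_of_continuousAt hgf hf)

noncomputable def ramp (s t x : ℝ) : ℝ := max (min ((x - s) / (t - s)) 1) 0

section Ramp

variable {s t : ℝ}

lemma ramp_nonneg (x : ℝ) : 0 ≤ ramp s t x := le_max_right _ _

lemma ramp_le_one (x : ℝ) : ramp s t x ≤ 1 := max_le (min_le_right _ _) zero_le_one

lemma abs_ramp_le_one (x : ℝ) : |ramp s t x| ≤ 1 := by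
  rw [abs_of_nonneg (ramp_nonneg x)]
  exact ramp_le_one x

lemma lipschitzWith_ramp : LipschitzWith ‖(t - s)⁻¹‖₊ (ramp s t) := by
  have h : LipschitzWith ‖(t - s)⁻¹‖₊ fun x : ℝ => (x - s) / (t - s) :=
    LipschitzWith.of_dist_le_mul fun x y => by
      rw [Real.dist_eq, Real.dist_eq, coe_nnnorm, Real.norm_eq_abs, ← sub_div,
        sub_sub_sub_cancel_right, div_eq_mul_inv, abs_mul, mul_comm]
  exact (h.min_const 1).max_const 0

lemma indicator_Ici_le_ramp (hst : s < t) : (Ici t).indicator 1 ≤ ramp s t := by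
  intro x
  by_cases hx : t ≤ x
  · have h1 : 1 ≤ (x - s) / (t - s) := by rw [le_div_iff₀ (sub_pos.2 hst)]; linarith
    simp [indicator_of_mem (mem_Ici.2 hx), ramp, min_eq_right h1]
  · simp [indicator_of_notMem (notMem_Ici.2 (not_le.1 hx)), ramp_nonneg]

lemma ramp_le_indicator_Ici (hst : s < t) : ramp s t ≤ (Ici s).indicator 1 := by
  intro x
  by_cases hx : s ≤ x
  · simp [indicator_of_mem (mem_Ici.2 hx), ramp_le_one]
  · have h0 : (x - s) / (t - s) ≤ 0 := div_nonpos_of_nonpos_of_nonneg (by linarith) (by linarith)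
    simp [indicator_of_notMem (notMem_Ici.2 (not_le.1 hx)), ramp, min_le_of_left_le h0]

end Ramp

section UpperSurvival

variable {Ω : Type*} [MeasurableSpace Ω]

lemma measureReal_le_integral_of_indicator_le {μ : Measure Ω} [IsFiniteMeasure μ] {A : Set Ω}
    (hA : MeasurableSet A) {f : Ω → ℝ} (hf : Integrable f μ) (h : A.indicator 1 ≤ f) :
    μ.real A ≤ ∫ ω, f ω ∂μ := by
  rw [← integral_indicator_one hA]
  exact integral_mono ((integrable_const 1).indicator hA) hf h

lemma integral_le_measureReal_of_le_indicator {μ : Measure Ω} [IsFiniteMeasure μ] {A : Set Ω}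
    (hA : MeasurableSet A) {f : Ω → ℝ} (hf : Integrable f μ) (h : f ≤ A.indicator 1) :
    ∫ ω, f ω ∂μ ≤ μ.real A := by
  rw [← integral_indicator_one hA]
  exact integral_mono hf ((integrable_const 1).indicator hA) h

variable {P : Measure Ω} [IsProbabilityMeasure P] {X : Ω → ℝ} {s t : ℝ}

lemma integrable_ramp_comp (hX : Measurable X) : Integrable (fun ω => ramp s t (X ω)) P :=
  .of_bound (lipschitzWith_ramp.continuous.measurable.comp hX).aestronglyMeasurable 1
    (ae_of_all _ fun ω => abs_ramp_le_one (X ω))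

lemma integral_ramp_comp_le_one : ∫ ω, ramp s t (X ω) ∂P ≤ 1 :=
  (integral_mono_of_nonneg (ae_of_all _ fun _ => ramp_nonneg _) (integrable_const 1)
    (ae_of_all _ fun ω => ramp_le_one (X ω))).trans_eq (by simp)

lemma measureReal_le_integral_ramp_comp (hX : Measurable X) (hst : s < t) :
    P.real {ω | t ≤ X ω} ≤ ∫ ω, ramp s t (X ω) ∂P :=
  measureReal_le_integral_of_indicator_le (measurableSet_le measurable_const hX)
    (integrable_ramp_comp hX) fun ω => by
      simpa only [indicator_apply, mem_ofPred_eq, mem_Ici, Pi.one_apply] using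
        indicator_Ici_le_ramp hst (X ω)

lemma integral_ramp_comp_le_measureReal (hX : Measurable X) (hst : s < t) :
    ∫ ω, ramp s t (X ω) ∂P ≤ P.real {ω | s ≤ X ω} :=
  integral_le_measureReal_of_le_indicator (measurableSet_le measurable_const hX)
    (integrable_ramp_comp hX) fun ω => by
      simpa only [indicator_apply, mem_ofPred_eq, mem_Ici, Pi.one_apply] using
        ramp_le_indicator_Ici hst (X ω)

/-- The survival function `t ↦ 𝕍(X ≥ t)` of the upper probability `𝕍 = sup_{P ∈ 𝒫} P`. -/
noncomputable def upperSurvival (Ps : Set (Measure Ω)) (X : Ω → ℝ) (t : ℝ) : ℝ :=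
  ⨆ P ∈ Ps, P.real {ω | t ≤ X ω}

end UpperSurvival

theorem upperSurvival_le_of_lt {Ω₁ Ω₂ : Type*} [MeasurableSpace Ω₁] [MeasurableSpace Ω₂]
    {𝒫₁ : Set (Measure Ω₁)} {𝒫₂ : Set (Measure Ω₂)}
    (h₁ : ∀ P ∈ 𝒫₁, IsProbabilityMeasure P) (h₂ : ∀ P ∈ 𝒫₂, IsProbabilityMeasure P)
    {X : Ω₁ → ℝ} {Y : Ω₂ → ℝ} (hX : Measurable X) (hY : Measurable Y)
    (hid : ∀ φ : ℝ → ℝ, (∃ K, LipschitzWith K φ) → (∃ M, ∀ x, |φ x| ≤ M) →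
      (⨆ P ∈ 𝒫₁, ∫ ω, φ (X ω) ∂P) = ⨆ P ∈ 𝒫₂, ∫ ω, φ (Y ω) ∂P)
    {s t : ℝ} (hst : s < t) :
    upperSurvival 𝒫₁ X t ≤ upperSurvival 𝒫₂ Y s :=
  calc upperSurvival 𝒫₁ X t
      ≤ ⨆ P ∈ 𝒫₁, ∫ ω, ramp s t (X ω) ∂P :=
        Real.biSup_mono zero_le_one (fun P hP => haveI := h₁ P hP; integral_ramp_comp_le_one)
          fun P hP => haveI := h₁ P hP; measureReal_le_integral_ramp_comp hX hst
    _ = ⨆ P ∈ 𝒫₂, ∫ ω, ramp s t (Y ω) ∂P :=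
        hid _ ⟨_, lipschitzWith_ramp⟩ ⟨1, abs_ramp_le_one⟩
    _ ≤ upperSurvival 𝒫₂ Y s :=
        Real.biSup_mono zero_le_one (fun P hP => haveI := h₂ P hP; measureReal_le_one)
          fun P hP => haveI := h₂ P hP; integral_ramp_comp_le_measureReal hY hst

theorem stmt1_general {Ω₁ Ω₂ : Type*} [MeasurableSpace Ω₁] [MeasurableSpace Ω₂]
    (𝒫₁ : Set (Measure Ω₁)) (𝒫₂ : Set (Measure Ω₂))
    (h₁ : ∀ P ∈ 𝒫₁, IsProbabilityMeasure P) (h₂ : ∀ P ∈ 𝒫₂, IsProbabilityMeasure P)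
    (X : Ω₁ → ℝ) (Y : Ω₂ → ℝ) (hX : Measurable X) (hY : Measurable Y)
    (hid : ∀ φ : ℝ → ℝ, (∃ K, LipschitzWith K φ) → (∃ M, ∀ x, |φ x| ≤ M) →
      (⨆ P ∈ 𝒫₁, ∫ ω, φ (X ω) ∂P) = ⨆ P ∈ 𝒫₂, ∫ ω, φ (Y ω) ∂P) :
    (∫ t in Set.Ioi (0:ℝ), (⨆ P ∈ 𝒫₁, (P {ω | t ≤ X ω}).toReal))
      + (∫ t in Set.Iio (0:ℝ), ((⨆ P ∈ 𝒫₁, (P {ω | t ≤ X ω}).toReal) - 1))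
    = (∫ t in Set.Ioi (0:ℝ), (⨆ P ∈ 𝒫₂, (P {ω | t ≤ Y ω}).toReal))
      + ∫ t in Set.Iio (0:ℝ), ((⨆ P ∈ 𝒫₂, (P {ω | t ≤ Y ω}).toReal) - 1) := by
  have hae : upperSurvival 𝒫₁ X =ᵐ[volume] upperSurvival 𝒫₂ Y :=
    ae_eq_of_forall_lt_le (fun _ _ => upperSurvival_le_of_lt h₁ h₂ hX hY hid)
      (fun _ _ => upperSurvival_le_of_lt h₂ h₁ hY hX fun φ hφ hφ' => (hid φ hφ hφ').symm)
  change (∫ t in Ioi (0:ℝ), upperSurvival 𝒫₁ X t) + ∫ t in Iio (0:ℝ), (upperSurvival 𝒫₁ X t - 1)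
    = (∫ t in Ioi (0:ℝ), upperSurvival 𝒫₂ Y t) + ∫ t in Iio (0:ℝ), (upperSurvival 𝒫₂ Y t - 1)
  congr 1
  · exact integral_congr_ae (ae_restrict_of_ae hae)
  · exact integral_congr_ae (ae_restrict_of_ae (hae.sub EventuallyEq.rfl))

theorem stmt1 {Ω₁ Ω₂ : Type*} [MeasurableSpace Ω₁] [MeasurableSpace Ω₂]
    (𝒫₁ : Set (Measure Ω₁)) (𝒫₂ : Set (Measure Ω₂))
    (h₁ : ∀ P ∈ 𝒫₁, IsProbabilityMeasure P) (h₂ : ∀ P ∈ 𝒫₂, IsProbabilityMeasure P)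
    (hne₁ : 𝒫₁.Nonempty) (hne₂ : 𝒫₂.Nonempty)
    (X : Ω₁ → ℝ) (Y : Ω₂ → ℝ) (hX : Measurable X) (hY : Measurable Y)
    (hid : ∀ φ : ℝ → ℝ, (∃ K, LipschitzWith K φ) → (∃ M, ∀ x, |φ x| ≤ M) →
      (⨆ P ∈ 𝒫₁, ∫ ω, φ (X ω) ∂P) = ⨆ P ∈ 𝒫₂, ∫ ω, φ (Y ω) ∂P) :
    (∫ t in Set.Ioi (0:ℝ), (⨆ P ∈ 𝒫₁, (P {ω | t ≤ X ω}).toReal))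
      + (∫ t in Set.Iio (0:ℝ), ((⨆ P ∈ 𝒫₁, (P {ω | t ≤ X ω}).toReal) - 1))
    = (∫ t in Set.Ioi (0:ℝ), (⨆ P ∈ 𝒫₂, (P {ω | t ≤ Y ω}).toReal))
      + ∫ t in Set.Iio (0:ℝ), ((⨆ P ∈ 𝒫₂, (P {ω | t ≤ Y ω}).toReal) - 1) :=
  stmt1_general 𝒫₁ 𝒫₂ h₁ h₂ X Y hX hY hid
end

section
/- Fix r ∈ (1,2). For every integer j ≥ 1 and real number y, (|y| − j^{1/r})⁺ ≤ (1/r)·1_{[|y| ≥ j^{1/r}]} + (1/r)·Σ_{i=j+1}^∞ i^{1/r − 1}·1_{[|y|^r ≥ i]}. -/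
private lemma key_step (r : ℝ) (hr1 : 1 < r) (x : ℝ) (hx : 1 ≤ x) :
    (x+1)^(1/r) - x^(1/r) ≤ (1/r) * x^(1/r-1) := by
  have hx0 : (0:ℝ) < x := by linarith
  have hderiv : ∀ z ∈ Set.Ioo x (x+1),
      HasDerivAt (fun t : ℝ => t^(1/r)) ((1/r) * z^(1/r-1)) z := by
    intro z hz
    exact Real.hasDerivAt_rpow_const (Or.inl (ne_of_gt (lt_trans hx0 hz.1)))
  have hcont : ContinuousOn (fun t : ℝ => t^(1/r)) (Set.Icc x (x+1)) := by
    intro z hz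
    exact (Real.continuousAt_rpow_const z (1/r)
      (Or.inl (ne_of_gt (lt_of_lt_of_le hx0 hz.1)))).continuousWithinAt
  obtain ⟨c, hc, hceq⟩ := exists_hasDerivAt_eq_slope (fun t : ℝ => t^(1/r))
    (fun z => (1/r) * z^(1/r-1)) (by linarith : x < x+1) hcont hderiv
  have heq : (x+1)^(1/r) - x^(1/r) = (1/r) * c^(1/r-1) := by
    rw [hceq]; simp
  rw [heq]
  have hcle : c^(1/r-1) ≤ x^(1/r-1) := by
    apply Real.rpow_le_rpow_of_nonpos hx0 hc.1.le
    have : 1/r < 1 := by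
      rw [div_lt_one (by linarith)]; linarith
    linarith
  have hr0 : (0:ℝ) ≤ 1/r := by positivity
  exact mul_le_mul_of_nonneg_left hcle hr0

theorem stmt5 (r : ℝ) (hr1 : 1 < r) (hr2 : r < 2) (j : ℕ) (hj : 1 ≤ j) (y : ℝ) :
    max (|y| - (j:ℝ)^(1/r)) 0 ≤
      (1/r) * (if (j:ℝ)^(1/r) ≤ |y| then 1 else 0) +
      (1/r) * ∑' i : ℕ, if j + 1 ≤ i ∧ (i:ℝ) ≤ |y|^r then (i:ℝ)^(1/r - 1) else 0 := by
  have hr0 : (0:ℝ) < r := by linarith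
  have hr0' : (0:ℝ) ≤ 1/r := by positivity
  set t := |y| with ht
  have ht0 : 0 ≤ t := abs_nonneg y
  set f : ℕ → ℝ := fun i => if j + 1 ≤ i ∧ (i:ℝ) ≤ t^r then (i:ℝ)^(1/r - 1) else 0 with hf
  have hfnn : ∀ i, 0 ≤ f i := by
    intro i; simp only [hf]
    split
    · positivity
    · exact le_rfl
  by_cases hty : (j:ℝ)^(1/r) ≤ t
  · -- main case
    have hj1 : (1:ℝ) ≤ (j:ℝ) := by exact_mod_cast hj
    have hjt : (j:ℝ) ≤ t^r := by
      have h1 : ((j:ℝ)^(1/r))^r ≤ t^r :=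
        Real.rpow_le_rpow (by positivity) hty hr0.le
      rwa [← Real.rpow_mul (Nat.cast_nonneg j), one_div_mul_cancel hr0.ne',
        Real.rpow_one] at h1
    have htr0 : 0 ≤ t^r := le_trans (by linarith) hjt
    set N := ⌊t^r⌋₊ with hNdef
    have hjN : j ≤ N := Nat.le_floor hjt
    have hNle : (N:ℝ) ≤ t^r := Nat.floor_le htr0
    have htN : t^r < (N:ℝ) + 1 := Nat.lt_floor_add_one _
    have htlt : t < ((N:ℝ)+1)^(1/r) := by
      have h1 : (t^r)^(1/r) < ((N:ℝ)+1)^(1/r) :=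
        Real.rpow_lt_rpow htr0 htN (by positivity)
      rwa [← Real.rpow_mul ht0, mul_one_div_cancel (ne_of_gt hr0),
        Real.rpow_one] at h1
    -- telescoping bound
    have tele : ∀ M, j ≤ M → ((M:ℝ)+1)^(1/r) ≤
        (j:ℝ)^(1/r) + ∑ i ∈ Finset.Icc j M, (1/r) * (i:ℝ)^(1/r-1) := by
      intro M hM
      induction M, hM using Nat.le_induction with
      | base =>
        rw [Finset.Icc_self, Finset.sum_singleton]
        have := key_step r hr1 (j:ℝ) hj1
        linarith
      | succ n hn ih =>
        have hins : Finset.Icc j (n+1) = insert (n+1) (Finset.Icc j n) := by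
          ext k; simp [Finset.mem_Icc]; omega
        rw [hins, Finset.sum_insert (by simp)]
        have hkey := key_step r hr1 ((n:ℝ)+1) (by exact_mod_cast Nat.one_le_iff_ne_zero.mpr (by omega) : (1:ℝ) ≤ (n:ℝ)+1)
        push_cast
        push_cast at ih hkey
        linarith
    have tele' := tele N hjN
    -- split off i = j
    have hsplit : Finset.Icc j N = insert j (Finset.Icc (j+1) N) := by
      ext k; simp [Finset.mem_Icc]; omega
    rw [hsplit, Finset.sum_insert (by simp)] at tele'
    -- first term bound
    have hjterm : (1/r) * (j:ℝ)^(1/r-1) ≤ (1/r) * 1 := by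
      apply mul_le_mul_of_nonneg_left _ hr0'
      apply Real.rpow_le_one_of_one_le_of_nonpos hj1
      have : 1/r < 1 := by rw [div_lt_one hr0]; linarith
      linarith
    -- sum bound via tsum
    have hsummable : Summable f := by
      apply summable_of_ne_finset_zero (s := Finset.Icc (j+1) N)
      intro i hi
      simp only [Finset.mem_Icc, not_and_or, not_le] at hi
      simp only [hf]
      rw [if_neg]
      rintro ⟨h1, h2⟩
      have : i ≤ N := Nat.le_floor h2
      omega
    have hsum_eq : ∑ i ∈ Finset.Icc (j+1) N, (i:ℝ)^(1/r-1)
        = ∑ i ∈ Finset.Icc (j+1) N, f i := by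
      apply Finset.sum_congr rfl
      intro i hi
      simp only [Finset.mem_Icc] at hi
      simp only [hf]
      rw [if_pos ⟨hi.1, le_trans (by exact_mod_cast hi.2) hNle⟩]
    have hsum_le : ∑ i ∈ Finset.Icc (j+1) N, f i ≤ ∑' i, f i :=
      Summable.sum_le_tsum _ (fun i _ => hfnn i) hsummable
    rw [if_pos hty]
    have hsum2 : ∑ i ∈ Finset.Icc (j+1) N, (1/r) * (i:ℝ)^(1/r-1)
        = (1/r) * ∑ i ∈ Finset.Icc (j+1) N, (i:ℝ)^(1/r-1) := by
      rw [Finset.mul_sum]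
    have hmax : max (t - (j:ℝ)^(1/r)) 0 = t - (j:ℝ)^(1/r) :=
      max_eq_left (by linarith)
    rw [hmax]
    have h2 : (1/r) * ∑ i ∈ Finset.Icc (j+1) N, (i:ℝ)^(1/r-1)
        ≤ (1/r) * ∑' i, f i := by
      apply mul_le_mul_of_nonneg_left _ hr0'
      rw [hsum_eq]; exact hsum_le
    calc t - (j:ℝ)^(1/r) ≤ ((N:ℝ)+1)^(1/r) - (j:ℝ)^(1/r) := by linarith
      _ ≤ (1/r) * (j:ℝ)^(1/r-1) + ∑ i ∈ Finset.Icc (j+1) N, (1/r) * (i:ℝ)^(1/r-1) := by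
          linarith
      _ ≤ (1/r) * 1 + (1/r) * ∑' i, f i := by rw [hsum2]; linarith
  · -- trivial case
    rw [max_eq_right (by push_neg at hty; linarith)]
    rw [if_neg hty]
    have : 0 ≤ ∑' i, f i := tsum_nonneg hfnn
    simp only [mul_zero]
    positivity
end

section
/- Fix r ∈ [1,2). Let X be a random variable and 𝕍 an upper probability with C_𝕍(|X|^r) = ∫₀^∞ 𝕍(|X|^r ≥ t) dt < ∞. Let C > 0 and let (X_j) be random variables with 𝕍(|X_j| ≥ x) ≤ C·𝕍(|X| ≥ x) for all x ≥ 0 and all j. Suppose r > 1. Then Σ_{j=1}^∞ j^{−1/r} · 𝔼[(|X_j| − j^{1/r})⁺] ≤ (2C/(r−1))·C_𝕍(|X|^r) < ∞, where 𝔼 is the upper expectation associated with 𝕍. -/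
/-!
Pointwise, `(y - j^{1/r})⁺ ≤ Σ_{i ≥ j} (1/r) i^{1/r-1} 1[y ≥ i^{1/r}]`: each increment
`(i+1)^{1/r} - i^{1/r}` is bounded by the tangent line of the concave map `t ↦ t^{1/r}`.
Integrating and using the domination hypothesis bounds the `j`-th upper expectation by
`C Σ_{i ≥ j} (1/r) i^{1/r-1} 𝕍(|X|^r ≥ i)`. After interchanging the sums,
`Σ_{j ≤ i} j^{-1/r} ≤ (r/(r-1)) i^{1-1/r}` leaves each `𝕍(|X|^r ≥ i)` with weight at most
`C/(r-1)`, and `Σ_{i ≥ 1} 𝕍(|X|^r ≥ i) ≤ C_𝕍(|X|^r)` since `t ↦ 𝕍(|X|^r ≥ t)` is antitone.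
The series are summed in `ℝ≥0∞`, where the interchange is unconditional.
-/

open MeasureTheory Set

open scoped ENNReal

lemma rpow_add_le_rpow_add_mul_rpow_sub_one {s b x : ℝ} (hs0 : 0 ≤ s) (hs1 : s ≤ 1) (hb : 0 < b)
    (hx : -b ≤ x) : (b + x) ^ s ≤ b ^ s + s * x * b ^ (s - 1) := by
  have hxb : -1 ≤ x / b := by rwa [le_div_iff₀ hb, neg_one_mul]
  calc (b + x) ^ s = b ^ s * (1 + x / b) ^ s := by
        rw [← Real.mul_rpow hb.le (by linarith), mul_add, mul_one, mul_div_cancel₀ _ hb.ne']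
    _ ≤ b ^ s * (1 + s * (x / b)) := by
        gcongr; exact rpow_one_add_le_one_add_mul_self hxb hs0 hs1
    _ = b ^ s + s * x * b ^ (s - 1) := by
        rw [Real.rpow_sub_one hb.ne']; field_simp

lemma sub_rpow_le_sum_Icc_mul_rpow_sub_one {s : ℝ} (hs0 : 0 ≤ s) (hs1 : s ≤ 1) {j m : ℕ}
    (hj : 1 ≤ j) (hjm : j ≤ m) :
    ((m : ℝ) + 1) ^ s - (j : ℝ) ^ s ≤ ∑ i ∈ Finset.Icc j m, s * (i : ℝ) ^ (s - 1) := by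
  induction m, hjm using Nat.le_induction with
  | base =>
    have := rpow_add_le_rpow_add_mul_rpow_sub_one hs0 hs1 (b := j) (x := 1)
      (by exact_mod_cast hj) (by linarith [(Nat.cast_nonneg j : (0 : ℝ) ≤ j)])
    simp only [Finset.Icc_self, Finset.sum_singleton]
    linarith
  | succ m hjm ih =>
    have := rpow_add_le_rpow_add_mul_rpow_sub_one hs0 hs1 (b := (m : ℝ) + 1) (x := 1)
      (by positivity) (by linarith [(Nat.cast_nonneg m : (0 : ℝ) ≤ m)])
    rw [Finset.sum_Icc_succ_top (by omega)]
    push_cast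
    linarith

lemma one_sub_mul_sum_Icc_rpow_neg_le {s : ℝ} (hs0 : 0 ≤ s) (hs1 : s < 1) (m : ℕ) :
    (1 - s) * ∑ j ∈ Finset.Icc 1 m, (j : ℝ) ^ (-s) ≤ (m : ℝ) ^ (1 - s) := by
  induction m with
  | zero => simp [Real.zero_rpow (by linarith : (1 : ℝ) - s ≠ 0)]
  | succ m ih =>
    have := rpow_add_le_rpow_add_mul_rpow_sub_one (by linarith) (by linarith : 1 - s ≤ 1)
      (b := (m : ℝ) + 1) (x := -1) (by positivity) (by linarith [(Nat.cast_nonneg m : (0 : ℝ) ≤ m)])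
    rw [Finset.sum_Icc_succ_top (by omega), mul_add]
    push_cast
    rw [show 1 - s - 1 = -s by ring, add_neg_cancel_right] at this
    linarith

lemma sum_Icc_rpow_neg_mul_le {s : ℝ} (hs0 : 0 ≤ s) (hs1 : s < 1) {i : ℕ} (hi : 1 ≤ i) :
    (∑ j ∈ Finset.Icc 1 i, (j : ℝ) ^ (-s)) * (s * (i : ℝ) ^ (s - 1)) ≤ s / (1 - s) := by
  have hi0 : (0 : ℝ) < i := by exact_mod_cast hi
  have hcancel : (i : ℝ) ^ (1 - s) * (i : ℝ) ^ (s - 1) = 1 := by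
    rw [← Real.rpow_add hi0]; simp
  rw [le_div_iff₀ (by linarith)]
  calc (∑ j ∈ Finset.Icc 1 i, (j : ℝ) ^ (-s)) * (s * (i : ℝ) ^ (s - 1)) * (1 - s)
      = ((1 - s) * ∑ j ∈ Finset.Icc 1 i, (j : ℝ) ^ (-s)) * (s * (i : ℝ) ^ (s - 1)) := by ring
    _ ≤ (i : ℝ) ^ (1 - s) * (s * (i : ℝ) ^ (s - 1)) := by
        gcongr; exact one_sub_mul_sum_Icc_rpow_neg_le hs0 hs1 i
    _ = s := by rw [mul_left_comm, hcancel, mul_one]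

lemma tsum_rpow_neg_mul_tsum_le {s : ℝ} (hs0 : 0 ≤ s) (hs1 : s < 1) (u : ℕ → ℝ≥0∞) :
    ∑' j : ℕ, (if 1 ≤ j then ENNReal.ofReal ((j : ℝ) ^ (-s)) *
        ∑' i : ℕ, (if j ≤ i then ENNReal.ofReal (s * (i : ℝ) ^ (s - 1)) else 0) * u i else 0) ≤
      ENNReal.ofReal (s / (1 - s)) * ∑' i : ℕ, (if 1 ≤ i then u i else 0) := by
  have hinner : ∀ i : ℕ, ∑' j : ℕ, (if 1 ≤ j ∧ j ≤ i then ENNReal.ofReal ((j : ℝ) ^ (-s)) *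
      ENNReal.ofReal (s * (i : ℝ) ^ (s - 1)) else 0) ≤
      if 1 ≤ i then ENNReal.ofReal (s / (1 - s)) else 0 := fun i => by
    rw [tsum_eq_sum (s := Finset.Icc 1 i) fun j hj => if_neg (by simpa using hj),
      ← Finset.sum_filter, Finset.filter_true_of_mem fun j hj => Finset.mem_Icc.1 hj]
    split_ifs with hi
    · rw [← Finset.sum_mul, ← ENNReal.ofReal_sum_of_nonneg fun j _ => by positivity,
        ← ENNReal.ofReal_mul (by positivity)]
      exact ENNReal.ofReal_le_ofReal (sum_Icc_rpow_neg_mul_le hs0 hs1 hi)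
    · simp [Finset.Icc_eq_empty_of_lt (by omega : i < 1)]
  calc _ = ∑' j : ℕ, ∑' i : ℕ, (if 1 ≤ j ∧ j ≤ i then ENNReal.ofReal ((j : ℝ) ^ (-s)) *
        ENNReal.ofReal (s * (i : ℝ) ^ (s - 1)) else 0) * u i := by
        refine tsum_congr fun j => ?_
        split_ifs with hj
        · rw [← ENNReal.tsum_mul_left]
          refine tsum_congr fun i => ?_
          by_cases hji : j ≤ i <;> simp [hj, hji, mul_assoc]
        · simp [hj]
    _ = ∑' i : ℕ, (∑' j : ℕ, if 1 ≤ j ∧ j ≤ i then ENNReal.ofReal ((j : ℝ) ^ (-s)) *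
        ENNReal.ofReal (s * (i : ℝ) ^ (s - 1)) else 0) * u i := by
        rw [ENNReal.tsum_comm]
        simp_rw [ENNReal.tsum_mul_right]
    _ ≤ ∑' i : ℕ, (if 1 ≤ i then ENNReal.ofReal (s / (1 - s)) else 0) * u i :=
        ENNReal.tsum_le_tsum fun i => mul_le_mul_left (hinner i) _
    _ = _ := by
        rw [← ENNReal.tsum_mul_left]
        exact tsum_congr fun i => by split_ifs <;> simp

lemma ofReal_max_sub_rpow_le_tsum {s : ℝ} (hs0 : 0 < s) (hs1 : s ≤ 1) {j : ℕ} (hj : 1 ≤ j) (y : ℝ) :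
    ENNReal.ofReal (max (y - (j : ℝ) ^ s) 0) ≤
      ∑' i : ℕ, (if j ≤ i then ENNReal.ofReal (s * (i : ℝ) ^ (s - 1)) else 0) *
        (if (i : ℝ) ^ s ≤ y then 1 else 0) := by
  by_cases hy : (j : ℝ) ^ s ≤ y
  swap
  · simp [le_of_lt (not_le.mp hy)]
  have hy0 : 0 ≤ y := (Real.rpow_nonneg (Nat.cast_nonneg j) s).trans hy
  set m := ⌊y ^ s⁻¹⌋₊
  have hle_m : ∀ i : ℕ, i ≤ m ↔ (i : ℝ) ^ s ≤ y := fun i => by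
    rw [← Real.le_rpow_inv_iff_of_pos (Nat.cast_nonneg i) hy0 hs0, Nat.le_floor_iff (by positivity)]
  have hym : y < ((m : ℝ) + 1) ^ s :=
    (Real.rpow_inv_lt_iff_of_pos hy0 (by positivity) hs0).1 (Nat.lt_floor_add_one _)
  have hterm : ∀ i ∈ Finset.Icc j m, 0 ≤ s * (i : ℝ) ^ (s - 1) := fun i _ => by positivity
  calc ENNReal.ofReal (max (y - (j : ℝ) ^ s) 0)
      ≤ ENNReal.ofReal (∑ i ∈ Finset.Icc j m, s * (i : ℝ) ^ (s - 1)) := by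
        refine ENNReal.ofReal_le_ofReal (max_le ?_ (Finset.sum_nonneg hterm))
        linarith [sub_rpow_le_sum_Icc_mul_rpow_sub_one hs0.le hs1 hj ((hle_m j).2 hy)]
    _ = ∑ i ∈ Finset.Icc j m, (if j ≤ i then ENNReal.ofReal (s * (i : ℝ) ^ (s - 1)) else 0) *
          (if (i : ℝ) ^ s ≤ y then 1 else 0) := by
        rw [ENNReal.ofReal_sum_of_nonneg hterm]
        refine Finset.sum_congr rfl fun i hi => ?_
        rw [Finset.mem_Icc] at hi
        rw [if_pos hi.1, if_pos ((hle_m i).1 hi.2), mul_one]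
    _ ≤ _ := ENNReal.sum_le_tsum _

lemma lintegral_max_sub_rpow_le_tsum {Ω : Type*} [MeasurableSpace Ω] (μ : Measure Ω) {Y : Ω → ℝ}
    (hY : Measurable Y) {s : ℝ} (hs0 : 0 < s) (hs1 : s ≤ 1) {j : ℕ} (hj : 1 ≤ j) :
    ∫⁻ ω, ENNReal.ofReal (max (Y ω - (j : ℝ) ^ s) 0) ∂μ ≤
      ∑' i : ℕ, (if j ≤ i then ENNReal.ofReal (s * (i : ℝ) ^ (s - 1)) else 0) *
        μ {ω | (i : ℝ) ^ s ≤ Y ω} := by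
  have hA : ∀ i : ℕ, MeasurableSet {ω | (i : ℝ) ^ s ≤ Y ω} :=
    fun i => measurableSet_le measurable_const hY
  calc ∫⁻ ω, ENNReal.ofReal (max (Y ω - (j : ℝ) ^ s) 0) ∂μ
      ≤ ∫⁻ ω, ∑' i : ℕ, (if j ≤ i then ENNReal.ofReal (s * (i : ℝ) ^ (s - 1)) else 0) *
          {ω | (i : ℝ) ^ s ≤ Y ω}.indicator 1 ω ∂μ :=
        lintegral_mono fun ω => ofReal_max_sub_rpow_le_tsum hs0 hs1 hj (Y ω)
    _ = _ := by
        rw [lintegral_tsum fun i => ((measurable_one.indicator (hA i)).const_mul _).aemeasurable]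
        simp_rw [lintegral_const_mul _ (measurable_one.indicator (hA _)),
          lintegral_indicator_one (hA _)]

lemma ofReal_integral_le_lintegral_ofReal {Ω : Type*} [MeasurableSpace Ω] {μ : Measure Ω}
    {f : Ω → ℝ} (hf : ∀ ω, 0 ≤ f ω) :
    ENNReal.ofReal (∫ ω, f ω ∂μ) ≤ ∫⁻ ω, ENNReal.ofReal (f ω) ∂μ := by
  rw [← Real.enorm_eq_ofReal (integral_nonneg hf)]
  simpa only [Real.enorm_eq_ofReal (hf _)] using enorm_integral_le_lintegral_enorm f

/-- An unbounded real `⨆` is `0`, so no boundedness hypothesis is needed. -/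
lemma ofReal_biSup_le {ι : Type*} {S : Set ι} {f : ι → ℝ} {L : ℝ≥0∞}
    (h : ∀ i ∈ S, ENNReal.ofReal (f i) ≤ L) : ENNReal.ofReal (⨆ i ∈ S, f i) ≤ L := by
  rcases eq_or_ne L ⊤ with rfl | hL
  · exact le_top
  rw [ENNReal.ofReal_le_iff_le_toReal hL]
  exact Real.iSup_le (fun i => Real.iSup_le
    (fun hi => (ENNReal.ofReal_le_iff_le_toReal hL).1 (h i hi)) ENNReal.toReal_nonneg)
    ENNReal.toReal_nonneg

lemma ofReal_biSup_integral_max_sub_rpow_le {Ω : Type*} [MeasurableSpace Ω]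
    (𝒫₀ : Set (Measure Ω)) {Y : Ω → ℝ} (hY : Measurable Y) {s : ℝ} (hs0 : 0 < s) (hs1 : s ≤ 1)
    {j : ℕ} (hj : 1 ≤ j) {b : ℕ → ℝ≥0∞} (hb : ∀ i : ℕ, ∀ P ∈ 𝒫₀, P {ω | (i : ℝ) ^ s ≤ Y ω} ≤ b i) :
    ENNReal.ofReal (⨆ P ∈ 𝒫₀, ∫ ω, max (Y ω - (j : ℝ) ^ s) 0 ∂P) ≤
      ∑' i : ℕ, (if j ≤ i then ENNReal.ofReal (s * (i : ℝ) ^ (s - 1)) else 0) * b i :=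
  ofReal_biSup_le fun P hP =>
    (ofReal_integral_le_lintegral_ofReal fun _ => le_max_right _ _).trans <|
      (lintegral_max_sub_rpow_le_tsum P hY hs0 hs1 hj).trans <|
        ENNReal.tsum_le_tsum fun i => mul_le_mul_right (hb i P hP) _

lemma tsum_ofReal_rpow_neg_mul_biSup_integral_le {Ω : Type*} [MeasurableSpace Ω]
    (𝒫₀ : Set (Measure Ω)) {Y : ℕ → Ω → ℝ} (hY : ∀ j, Measurable (Y j)) {s : ℝ} (hs0 : 0 < s)
    (hs1 : s < 1) {b : ℕ → ℝ≥0∞}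
    (hb : ∀ j : ℕ, 1 ≤ j → ∀ i : ℕ, ∀ P ∈ 𝒫₀, P {ω | (i : ℝ) ^ s ≤ Y j ω} ≤ b i) :
    ∑' j : ℕ, ENNReal.ofReal (if 1 ≤ j then
        (j : ℝ) ^ (-s) * ⨆ P ∈ 𝒫₀, ∫ ω, max (Y j ω - (j : ℝ) ^ s) 0 ∂P else 0) ≤
      ENNReal.ofReal (s / (1 - s)) * ∑' i : ℕ, (if 1 ≤ i then b i else 0) := by
  refine le_trans (ENNReal.tsum_le_tsum fun j => ?_) (tsum_rpow_neg_mul_tsum_le hs0.le hs1 b)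
  split_ifs with hj
  · rw [ENNReal.ofReal_mul (by positivity)]
    gcongr
    exact ofReal_biSup_integral_max_sub_rpow_le 𝒫₀ (hY j) hs0 hs1.le hj (hb j hj)
  · simp

lemma ofReal_biSup_toReal_measure {Ω : Type*} [MeasurableSpace Ω] {𝒫₀ : Set (Measure Ω)}
    (h𝒫 : ∀ P ∈ 𝒫₀, IsProbabilityMeasure P) (A : Set Ω) :
    ENNReal.ofReal (⨆ P ∈ 𝒫₀, (P A).toReal) = ⨆ P ∈ 𝒫₀, P A := by
  have hle : ∀ P, ⨆ _ : P ∈ 𝒫₀, P A ≤ 1 := fun P =>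
    iSup_le fun hP => have := h𝒫 P hP; prob_le_one
  have hfin : ∀ P, ⨆ _ : P ∈ 𝒫₀, P A ≠ ⊤ := fun P => ne_top_of_le_ne_top ENNReal.one_ne_top (hle P)
  rw [← ENNReal.ofReal_toReal (ne_top_of_le_ne_top ENNReal.one_ne_top (iSup_le hle)),
    ENNReal.toReal_iSup hfin]
  congr 1
  refine iSup_congr fun P => (ENNReal.toReal_iSup fun hP => ?_).symm
  have := h𝒫 P hP
  exact measure_ne_top P A

lemma measure_le_ofReal_mul_biSup {Ω : Type*} [MeasurableSpace Ω] {𝒫₀ : Set (Measure Ω)}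
    (h𝒫 : ∀ P ∈ 𝒫₀, IsProbabilityMeasure P) {A B : Set Ω} {C : ℝ} (hC : 0 ≤ C)
    (h : ⨆ P ∈ 𝒫₀, (P A).toReal ≤ C * ⨆ P ∈ 𝒫₀, (P B).toReal) {P : Measure Ω} (hP : P ∈ 𝒫₀) :
    P A ≤ ENNReal.ofReal C * ⨆ P ∈ 𝒫₀, P B := by
  calc P A ≤ ⨆ P ∈ 𝒫₀, P A := le_biSup (fun P => P A) hP
    _ = ENNReal.ofReal (⨆ P ∈ 𝒫₀, (P A).toReal) := (ofReal_biSup_toReal_measure h𝒫 A).symm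
    _ ≤ ENNReal.ofReal (C * ⨆ P ∈ 𝒫₀, (P B).toReal) := ENNReal.ofReal_le_ofReal h
    _ = ENNReal.ofReal C * ⨆ P ∈ 𝒫₀, P B := by
        rw [ENNReal.ofReal_mul hC, ofReal_biSup_toReal_measure h𝒫 B]

lemma measure_rpow_inv_le_ofReal_mul_biSup {Ω : Type*} [MeasurableSpace Ω]
    {𝒫₀ : Set (Measure Ω)} (h𝒫 : ∀ P ∈ 𝒫₀, IsProbabilityMeasure P) {Y Z : Ω → ℝ} {C r x : ℝ}
    (hC : 0 ≤ C) (hr : 0 < r) (hx : 0 ≤ x) (hZ : ∀ ω, 0 ≤ Z ω)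
    (h : ⨆ P ∈ 𝒫₀, (P {ω | x ^ r⁻¹ ≤ Y ω}).toReal ≤
      C * ⨆ P ∈ 𝒫₀, (P {ω | x ^ r⁻¹ ≤ Z ω}).toReal) {P : Measure Ω} (hP : P ∈ 𝒫₀) :
    P {ω | x ^ r⁻¹ ≤ Y ω} ≤ ENNReal.ofReal C * ⨆ P ∈ 𝒫₀, P {ω | x ≤ Z ω ^ r} := by
  have hsets : {ω | x ^ r⁻¹ ≤ Z ω} = {ω | x ≤ Z ω ^ r} :=
    Set.ext fun ω => Real.rpow_inv_le_iff_of_pos hx (hZ ω) hr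
  exact hsets ▸ measure_le_ofReal_mul_biSup h𝒫 hC h hP

lemma tsum_le_setLIntegral_Ioi_of_antitoneOn {g : ℝ → ℝ≥0∞} (hg : AntitoneOn g (Ioi 0)) :
    ∑' i : ℕ, (if 1 ≤ i then g i else 0) ≤ ∫⁻ t in Ioi 0, g t := by
  have hdisj : Pairwise (Function.onFun Disjoint fun i : ℕ => Ioc (i : ℝ) (i + 1)) :=
    fun i k hik => by
      simpa using pairwise_disjoint_Ioc_intCast ℝ (Nat.cast_injective.ne hik : (i : ℤ) ≠ k)
  calc ∑' i : ℕ, (if 1 ≤ i then g i else 0)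
      = ∑' i : ℕ, g ((i : ℝ) + 1) := by
        rw [tsum_eq_zero_add' ENNReal.summable]
        simp
    _ ≤ ∑' i : ℕ, ∫⁻ t in Ioc (i : ℝ) (i + 1), g t := ENNReal.tsum_le_tsum fun i => by
        calc g ((i : ℝ) + 1) = ∫⁻ _ in Ioc (i : ℝ) (i + 1), g ((i : ℝ) + 1) := by simp
          _ ≤ _ := setLIntegral_mono' measurableSet_Ioc fun t ht =>
            hg ((Nat.cast_nonneg i).trans_lt ht.1) (mem_Ioi.2 (by positivity)) ht.2
    _ = ∫⁻ t in ⋃ i : ℕ, Ioc (i : ℝ) (i + 1), g t :=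
        (lintegral_iUnion (fun _ => measurableSet_Ioc) hdisj g).symm
    _ ≤ ∫⁻ t in Ioi 0, g t :=
        lintegral_mono_set (iUnion_subset fun i t ht => (Nat.cast_nonneg i).trans_lt ht.1)

lemma tsum_biSup_measure_le_ofReal_integral {Ω : Type*} [MeasurableSpace Ω]
    {𝒫₀ : Set (Measure Ω)} (h𝒫 : ∀ P ∈ 𝒫₀, IsProbabilityMeasure P) {Z : Ω → ℝ}
    (hZ : IntegrableOn (fun t => ⨆ P ∈ 𝒫₀, (P {ω | t ≤ Z ω}).toReal) (Ioi 0)) :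
    ∑' i : ℕ, (if 1 ≤ i then ⨆ P ∈ 𝒫₀, P {ω | (i : ℝ) ≤ Z ω} else 0) ≤
      ENNReal.ofReal (∫ t in Ioi 0, ⨆ P ∈ 𝒫₀, (P {ω | t ≤ Z ω}).toReal) := by
  rw [ofReal_integral_eq_lintegral_ofReal hZ (ae_of_all _ fun t =>
    Real.iSup_nonneg fun P => Real.iSup_nonneg fun _ => ENNReal.toReal_nonneg)]
  simp_rw [ofReal_biSup_toReal_measure h𝒫]
  exact tsum_le_setLIntegral_Ioi_of_antitoneOn fun t _ t' _ htt' =>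
    iSup₂_mono fun P _ => measure_mono fun ω (hω : t' ≤ Z ω) => htt'.trans hω

lemma summable_and_tsum_le_of_tsum_ofReal_le {a : ℕ → ℝ} {B : ℝ} (ha : ∀ j, 0 ≤ a j) (hB : 0 ≤ B)
    (h : ∑' j, ENNReal.ofReal (a j) ≤ ENNReal.ofReal B) : Summable a ∧ ∑' j, a j ≤ B := by
  have hsum : Summable a := by
    simpa [ENNReal.toReal_ofReal (ha _)] using
      ENNReal.summable_toReal (ne_top_of_le_ne_top ENNReal.ofReal_ne_top h)
  refine ⟨hsum, ?_⟩
  rwa [← ENNReal.ofReal_tsum_of_nonneg ha hsum, ENNReal.ofReal_le_ofReal_iff hB] at h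

theorem stmt6_general {Ω : Type*} [MeasurableSpace Ω] (𝒫₀ : Set (Measure Ω))
    (hP : ∀ P ∈ 𝒫₀, IsProbabilityMeasure P)
    (r : ℝ) (hr1 : 1 < r)
    (X : Ω → ℝ) (Xs : ℕ → Ω → ℝ) (hXs : ∀ j, Measurable (Xs j))
    (hCh : IntegrableOn (fun t => ⨆ P ∈ 𝒫₀, (P {ω | t ≤ |X ω|^r}).toReal) (Set.Ioi 0))
    (C : ℝ) (hC : 0 < C)
    (hdom : ∀ x : ℝ, 0 ≤ x → ∀ j : ℕ, 1 ≤ j →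
      (⨆ P ∈ 𝒫₀, (P {ω | x ≤ |Xs j ω|}).toReal) ≤ C * ⨆ P ∈ 𝒫₀, (P {ω | x ≤ |X ω|}).toReal) :
    Summable (fun j : ℕ => if 1 ≤ j then
        (j:ℝ)^(-(1/r)) * ⨆ P ∈ 𝒫₀, ∫ ω, max (|Xs j ω| - (j:ℝ)^(1/r)) 0 ∂P else 0) ∧
    (∑' j : ℕ, if 1 ≤ j then
        (j:ℝ)^(-(1/r)) * ⨆ P ∈ 𝒫₀, ∫ ω, max (|Xs j ω| - (j:ℝ)^(1/r)) 0 ∂P else 0)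
      ≤ (2*C/(r-1)) * ∫ t in Set.Ioi (0:ℝ), ⨆ P ∈ 𝒫₀, (P {ω | t ≤ |X ω|^r}).toReal := by
  set I := ∫ t in Ioi (0 : ℝ), ⨆ P ∈ 𝒫₀, (P {ω | t ≤ |X ω| ^ r}).toReal
  set s := 1 / r with hs
  have hs0 : 0 < s := by positivity
  have hs1 : s < 1 := (div_lt_one (by linarith)).2 hr1
  have hI : 0 ≤ I := setIntegral_nonneg measurableSet_Ioi fun t _ =>
    Real.iSup_nonneg fun P => Real.iSup_nonneg fun _ => ENNReal.toReal_nonneg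
  have hlevel : ∀ j : ℕ, 1 ≤ j → ∀ i : ℕ, ∀ P ∈ 𝒫₀, P {ω | (i : ℝ) ^ s ≤ |Xs j ω|} ≤
      ENNReal.ofReal C * ⨆ P ∈ 𝒫₀, P {ω | (i : ℝ) ≤ |X ω| ^ r} := fun j hj i P hP' => by
    rw [hs, one_div]
    exact measure_rpow_inv_le_ofReal_mul_biSup hP hC.le (by linarith) (Nat.cast_nonneg i)
      (fun ω => abs_nonneg _) (hdom _ (by positivity) j hj) hP'
  refine summable_and_tsum_le_of_tsum_ofReal_le (fun j => ?_) (by positivity) ?_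
  · split_ifs
    · exact mul_nonneg (by positivity) (Real.iSup_nonneg fun P => Real.iSup_nonneg fun _ =>
        integral_nonneg fun ω => le_max_right _ _)
    · exact le_rfl
  calc _ ≤ ENNReal.ofReal (s / (1 - s)) * ∑' i : ℕ,
        (if 1 ≤ i then ENNReal.ofReal C * ⨆ P ∈ 𝒫₀, P {ω | (i : ℝ) ≤ |X ω| ^ r} else 0) :=
        tsum_ofReal_rpow_neg_mul_biSup_integral_le 𝒫₀ (fun j => (hXs j).abs) hs0 hs1 hlevel
    _ ≤ ENNReal.ofReal (s / (1 - s)) * (ENNReal.ofReal C * ENNReal.ofReal I) := by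
        simp_rw [← mul_ite_zero, ENNReal.tsum_mul_left]
        gcongr
        exact tsum_biSup_measure_le_ofReal_integral hP hCh
    _ = ENNReal.ofReal (C / (r - 1) * I) := by
        rw [← ENNReal.ofReal_mul hC.le, ← ENNReal.ofReal_mul (by positivity)]
        congr 1
        rw [hs]
        field_simp
    _ ≤ ENNReal.ofReal (2 * C / (r - 1) * I) := by
        gcongr
        linarith

theorem stmt6 {Ω : Type*} [MeasurableSpace Ω] (𝒫₀ : Set (Measure Ω)) (hne : 𝒫₀.Nonempty)
    (hP : ∀ P ∈ 𝒫₀, IsProbabilityMeasure P)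
    (r : ℝ) (hr1 : 1 < r) (hr2 : r < 2)
    (X : Ω → ℝ) (hX : Measurable X) (Xs : ℕ → Ω → ℝ) (hXs : ∀ j, Measurable (Xs j))
    (hCh : IntegrableOn (fun t => ⨆ P ∈ 𝒫₀, (P {ω | t ≤ |X ω|^r}).toReal) (Set.Ioi 0))
    (C : ℝ) (hC : 0 < C)
    (hdom : ∀ x : ℝ, 0 ≤ x → ∀ j : ℕ, 1 ≤ j →
      (⨆ P ∈ 𝒫₀, (P {ω | x ≤ |Xs j ω|}).toReal) ≤ C * ⨆ P ∈ 𝒫₀, (P {ω | x ≤ |X ω|}).toReal) :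
    Summable (fun j : ℕ => if 1 ≤ j then
        (j:ℝ)^(-(1/r)) * ⨆ P ∈ 𝒫₀, ∫ ω, max (|Xs j ω| - (j:ℝ)^(1/r)) 0 ∂P else 0) ∧
    (∑' j : ℕ, if 1 ≤ j then
        (j:ℝ)^(-(1/r)) * ⨆ P ∈ 𝒫₀, ∫ ω, max (|Xs j ω| - (j:ℝ)^(1/r)) 0 ∂P else 0)
      ≤ (2*C/(r-1)) * ∫ t in Set.Ioi (0:ℝ), ⨆ P ∈ 𝒫₀, (P {ω | t ≤ |X ω|^r}).toReal :=
  stmt6_general 𝒫₀ hP r hr1 X Xs hXs hCh C hC hdom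
end

section
/- Let (X_n) be a sequence of random variables on (Ω,ℱ) that is independent in Peng's sense under the upper expectation 𝔼 of a set 𝒫 of probability measures: for each n, 𝔼[φ(X_1,…,X_{n−1}, X_n)] = 𝔼[ψ(X_1,…,X_{n−1})] where ψ(x) = 𝔼[φ(x, X_n)], for all bounded Lipschitz φ. Then (X_n) is pseudo-independent: for every P ∈ 𝒫, every n, and every bounded Lipschitz φ : ℝ → ℝ, E_P[φ(X_n) | σ(X_1,…,X_{n−1})] ≤ 𝔼[φ(X_n)] P-almost surely. -/
/-!
Fix `P ∈ 𝒫₀`, put `Y = (X₁, …, X_{n-1})` and `c = 𝔼[φ(X_n)]`. For Lipschitz `g` with values in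
`[0, 1]`, independence applied to `ψ(y, x) = g(y) (φ(x) - c)` gives
`E_P[g(Y) (φ(X_n) - c)] ≤ 𝔼[ψ(Y, X_n)] = 𝔼[𝔼[ψ(y, X_n)]_{y = Y}] ≤ 0`, because
`𝔼[ψ(y, X_n)] = g(y) (𝔼[φ(X_n)] - c) ≤ 0` for every `y`. Thickened indicators of closed sets are
such `g`, so the images under `Y` of the measures `(φ(X_n) - c)⁺ P` and `(φ(X_n) - c)⁻ P` compare
on closed sets, hence on all Borel sets by regularity. Thus `∫_{Y ∈ B} (φ(X_n) - c) dP ≤ 0` for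
every Borel `B`, which says `E_P[φ(X_n) | σ(Y)] ≤ c`.
-/

open MeasureTheory
open scoped ENNReal NNReal

theorem LipschitzWith.mul_of_norm_le {α R : Type*} [PseudoMetricSpace α] [SeminormedRing R]
    {f g : α → R} {Kf Kg : ℝ≥0} {A B : ℝ} (hf : LipschitzWith Kf f) (hg : LipschitzWith Kg g)
    (hfA : ∀ x, ‖f x‖ ≤ A) (hgB : ∀ x, ‖g x‖ ≤ B) :
    LipschitzWith (Kf * B.toNNReal + A.toNNReal * Kg) fun x => f x * g x := by
  refine LipschitzWith.of_dist_le_mul fun x y => ?_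
  have hfxy : ‖f x - f y‖ ≤ Kf * dist x y := by simpa [dist_eq_norm] using hf.dist_le_mul x y
  have hgxy : ‖g x - g y‖ ≤ Kg * dist x y := by simpa [dist_eq_norm] using hg.dist_le_mul x y
  rw [dist_eq_norm, show f x * g x - f y * g y = (f x - f y) * g x + f y * (g x - g y) by
    noncomm_ring]
  calc ‖(f x - f y) * g x + f y * (g x - g y)‖
      ≤ ‖f x - f y‖ * ‖g x‖ + ‖f y‖ * ‖g x - g y‖ :=
        (norm_add_le _ _).trans (add_le_add (norm_mul_le _ _) (norm_mul_le _ _))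
    _ ≤ Kf * dist x y * B.toNNReal + A.toNNReal * (Kg * dist x y) := by
        gcongr
        · exact (hgB x).trans (Real.le_coe_toNNReal B)
        · exact (hfA y).trans (Real.le_coe_toNNReal A)
    _ = ↑(Kf * B.toNNReal + A.toNNReal * Kg) * dist x y := by push_cast; ring

theorem iSup_mem_Icc_one_eq_iSup_fin {α : Type*} [CompleteLattice α] (f : ℕ → α) (k : ℕ) :
    ⨆ i ∈ Finset.Icc 1 k, f i = ⨆ j : Fin k, f (j + 1) := by
  refine le_antisymm (iSup₂_le fun i hi => ?_) (iSup_le fun j => ?_)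
  · rw [Finset.mem_Icc] at hi
    obtain ⟨j, rfl⟩ : ∃ j, i = j + 1 := ⟨i - 1, by omega⟩
    exact le_iSup_of_le ⟨j, by omega⟩ le_rfl
  · exact le_iSup₂_of_le (j + 1) (by simp) le_rfl

theorem MeasurableSpace.comap_pi_eq_iSup {Ω ι : Type*} {β : ι → Type*}
    [∀ i, MeasurableSpace (β i)] (Z : ∀ i, Ω → β i) :
    MeasurableSpace.comap (fun ω i => Z i ω) MeasurableSpace.pi
      = ⨆ i, MeasurableSpace.comap (Z i) inferInstance := by
  simp only [MeasurableSpace.pi, MeasurableSpace.comap_iSup, MeasurableSpace.comap_comp]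
  rfl

namespace MeasureTheory

theorem Measure.le_of_forall_lintegral_lipschitz_le {X : Type*}
    [PseudoEMetricSpace X] [MeasurableSpace X] [BorelSpace X]
    {μ ν : Measure X} [IsFiniteMeasure μ] [IsFiniteMeasure ν]
    (h : ∀ g : X → ℝ≥0, (∃ K, LipschitzWith K g) → (∀ x, g x ≤ 1) →
      ∫⁻ x, g x ∂μ ≤ ∫⁻ x, g x ∂ν) :
    μ ≤ ν := by
  have hclosed : ∀ F : Set X, IsClosed F → μ F ≤ ν F := fun F hF =>
    have hδ : ∀ n : ℕ, (0 : ℝ) < 1 / (n + 1) := fun _ => Nat.one_div_pos_of_nat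
    le_of_tendsto_of_tendsto'
      (tendsto_lintegral_thickenedIndicator_of_isClosed μ hF hδ
        tendsto_one_div_add_atTop_nhds_zero_nat)
      (tendsto_lintegral_thickenedIndicator_of_isClosed ν hF hδ
        tendsto_one_div_add_atTop_nhds_zero_nat)
      fun n => h _ ⟨_, lipschitzWith_thickenedIndicator (hδ n) F⟩
        (thickenedIndicator_le_one (hδ n) F)
  refine Measure.le_iff.2 fun A hA => le_of_forall_lt fun r hr => ?_
  obtain ⟨F, hFA, hF, hrF⟩ := hA.exists_lt_isClosed_of_ne_top (measure_ne_top μ A) hr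
  exact hrF.trans_le ((hclosed F hF).trans (measure_mono hFA))

variable {Ω : Type*} {m₀ : MeasurableSpace Ω} {μ : Measure Ω}

theorem lintegral_ofReal_le_lintegral_ofReal_neg_of_integral_nonpos {F : Ω → ℝ}
    (hF : Integrable F μ) (h : ∫ ω, F ω ∂μ ≤ 0) :
    ∫⁻ ω, ENNReal.ofReal (F ω) ∂μ ≤ ∫⁻ ω, ENNReal.ofReal (-F ω) ∂μ := by
  rw [integral_eq_lintegral_pos_part_sub_lintegral_neg_part hF, sub_nonpos] at h
  exact (ENNReal.toReal_le_toReal hF.lintegral_lt_top.ne hF.neg.lintegral_lt_top.ne).1 h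

theorem setIntegral_preimage_nonpos_of_forall_lipschitz {E : Type*} [PseudoEMetricSpace E]
    [MeasurableSpace E] [BorelSpace E] [IsFiniteMeasure μ] {Y : Ω → E} (hY : Measurable Y)
    {F : Ω → ℝ} (hF : Integrable F μ)
    (h : ∀ g : E → ℝ≥0, (∃ K, LipschitzWith K g) → (∀ x, g x ≤ 1) →
      ∫ ω, (g (Y ω) : ℝ) * F ω ∂μ ≤ 0)
    {B : Set E} (hB : MeasurableSet B) :
    ∫ ω in Y ⁻¹' B, F ω ∂μ ≤ 0 := by
  have := isFiniteMeasure_withDensity_ofReal hF.2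
  have := isFiniteMeasure_withDensity_ofReal hF.neg.2
  have hpush_le : (μ.withDensity fun ω => ENNReal.ofReal (F ω)).map Y ≤
      (μ.withDensity fun ω => ENNReal.ofReal (-F ω)).map Y := by
    refine Measure.le_of_forall_lintegral_lipschitz_le fun g ⟨K, hg⟩ hg1 => ?_
    have hgm : Measurable fun x => (g x : ℝ≥0∞) := hg.continuous.measurable.coe_nnreal_ennreal
    have hgY : Integrable (fun ω => (g (Y ω) : ℝ) * F ω) μ := by
      refine hF.bdd_mul (c := 1)
        (hg.continuous.measurable.comp hY).coe_nnreal_real.aestronglyMeasurable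
        (ae_of_all _ fun ω => ?_)
      simpa using hg1 (Y ω)
    rw [lintegral_map hgm hY, lintegral_map hgm hY,
      lintegral_withDensity_eq_lintegral_mul₀ hF.1.aemeasurable.ennreal_ofReal
        (g := fun ω => g (Y ω)) (hgm.comp hY).aemeasurable,
      lintegral_withDensity_eq_lintegral_mul₀ (f := fun ω => ENNReal.ofReal (-F ω))
        hF.1.aemeasurable.neg.ennreal_ofReal
        (g := fun ω => g (Y ω)) (hgm.comp hY).aemeasurable]
    have key := lintegral_ofReal_le_lintegral_ofReal_neg_of_integral_nonpos hgY (h g ⟨K, hg⟩ hg1)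
    simp only [← mul_neg, ENNReal.ofReal_mul (NNReal.coe_nonneg _), ENNReal.ofReal_coe_nnreal]
      at key
    simpa only [Pi.mul_apply, mul_comm] using key
  have hB_le := hpush_le B
  rw [Measure.map_apply hY hB, Measure.map_apply hY hB, withDensity_apply _ (hY hB),
    withDensity_apply _ (hY hB)] at hB_le
  rw [integral_eq_lintegral_pos_part_sub_lintegral_neg_part hF.integrableOn, sub_nonpos]
  exact ENNReal.toReal_mono hF.neg.integrableOn.lintegral_lt_top.ne hB_le

theorem condExp_le_of_forall_setIntegral_le {m : MeasurableSpace Ω} (hm : m ≤ m₀)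
    [SigmaFinite (μ.trim hm)] {f g : Ω → ℝ} (hf : Integrable f μ) (hg : Integrable g μ)
    (hgm : StronglyMeasurable[m] g)
    (hle : ∀ s, MeasurableSet[m] s → ∫ ω in s, f ω ∂μ ≤ ∫ ω in s, g ω ∂μ) :
    μ[f | m] ≤ᵐ[μ] g :=
  ae_le_of_ae_le_trim <| ae_le_of_forall_setIntegral_le
    (integrable_condExp.trim hm stronglyMeasurable_condExp) (hg.trim hm hgm) fun s hs _ => by
      rw [← setIntegral_trim hm stronglyMeasurable_condExp hs, ← setIntegral_trim hm hgm hs,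
        setIntegral_condExp hm hf hs]
      exact hle s hs

theorem condExp_comap_le_of_forall_lipschitz {E : Type*} [PseudoEMetricSpace E]
    [MeasurableSpace E] [BorelSpace E] [IsFiniteMeasure μ] {Y : Ω → E} (hY : Measurable Y)
    {f : Ω → ℝ} (hf : Integrable f μ) {c : ℝ}
    (h : ∀ g : E → ℝ≥0, (∃ K, LipschitzWith K g) → (∀ x, g x ≤ 1) →
      ∫ ω, (g (Y ω) : ℝ) * (f ω - c) ∂μ ≤ 0) :
    μ[f | MeasurableSpace.comap Y inferInstance] ≤ᵐ[μ] fun _ => c := by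
  have := isFiniteMeasure_trim (μ := μ) hY.comap_le
  refine condExp_le_of_forall_setIntegral_le hY.comap_le hf (integrable_const c)
    stronglyMeasurable_const fun s ⟨B, hB, hs⟩ => ?_
  subst hs
  have := setIntegral_preimage_nonpos_of_forall_lipschitz (F := fun ω => f ω - c) hY
    (hf.sub (integrable_const c)) h hB
  rwa [integral_sub hf.integrableOn (integrable_const c).integrableOn, sub_nonpos] at this

-- A real `⨆` is `0` over an empty or unbounded family; it is only used here for bounded `h`.
noncomputable def upperExpectation (𝒫₀ : Set (Measure Ω)) (h : Ω → ℝ) : ℝ :=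
  ⨆ Q ∈ 𝒫₀, ∫ ω, h ω ∂Q

section UpperExpectation

variable {𝒫₀ : Set (Measure Ω)} (h𝒫₀ : ∀ Q ∈ 𝒫₀, IsProbabilityMeasure Q)
include h𝒫₀

theorem integral_le_upperExpectation {h : Ω → ℝ} {M : ℝ} (hM : ∀ ω, |h ω| ≤ M)
    {P : Measure Ω} (hP : P ∈ 𝒫₀) :
    ∫ ω, h ω ∂P ≤ upperExpectation 𝒫₀ h := by
  refine le_ciSup₂ (f := fun Q (_ : Q ∈ 𝒫₀) => ∫ ω, h ω ∂Q) ⟨M, ?_⟩ P hP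
  rintro _ ⟨_, ⟨Q, rfl⟩, ⟨hQ, rfl⟩⟩
  have := h𝒫₀ Q hQ
  have hbound := norm_integral_le_of_norm_le_const (μ := Q) (f := h) (ae_of_all _ hM)
  rw [probReal_univ, mul_one] at hbound
  exact (abs_le.1 hbound).2

theorem integral_nonpos_of_upperExpectation_section_nonpos {E F : Type*} {Y : Ω → E}
    {Z : Ω → F} {ψ : E × F → ℝ} {M : ℝ} (hψ : ∀ p, |ψ p| ≤ M)
    (hindep : upperExpectation 𝒫₀ (fun ω => ψ (Y ω, Z ω))
      = upperExpectation 𝒫₀ fun ω => upperExpectation 𝒫₀ fun ω' => ψ (Y ω, Z ω'))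
    (hsection : ∀ y, upperExpectation 𝒫₀ (fun ω' => ψ (y, Z ω')) ≤ 0)
    {P : Measure Ω} (hP : P ∈ 𝒫₀) :
    ∫ ω, ψ (Y ω, Z ω) ∂P ≤ 0 :=
  calc ∫ ω, ψ (Y ω, Z ω) ∂P ≤ upperExpectation 𝒫₀ (fun ω => ψ (Y ω, Z ω)) :=
        integral_le_upperExpectation h𝒫₀ (fun _ => hψ _) hP
    _ = upperExpectation 𝒫₀ fun ω => upperExpectation 𝒫₀ fun ω' => ψ (Y ω, Z ω') := hindep
    _ ≤ 0 := Real.iSup_nonpos fun _ => Real.iSup_nonpos fun _ =>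
        integral_nonpos fun ω => hsection (Y ω)

variable {E : Type*} [PseudoMetricSpace E] {Y : Ω → E} {Z : Ω → ℝ} (hZ : Measurable Z)
  (hindep : ∀ ψ : E × ℝ → ℝ, (∃ K, LipschitzWith K ψ) → (∃ M, ∀ p, |ψ p| ≤ M) →
    upperExpectation 𝒫₀ (fun ω => ψ (Y ω, Z ω))
      = upperExpectation 𝒫₀ fun ω => upperExpectation 𝒫₀ fun ω' => ψ (Y ω, Z ω'))
  {φ : ℝ → ℝ} {Kφ : ℝ≥0} (hφ : LipschitzWith Kφ φ) {M : ℝ} (hM : ∀ x, |φ x| ≤ M)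
include hZ hindep hφ hM

theorem integral_mul_sub_upperExpectation_nonpos {g : E → ℝ≥0} {Kg : ℝ≥0}
    (hg : LipschitzWith Kg g) (hg1 : ∀ y, g y ≤ 1) {P : Measure Ω} (hP : P ∈ 𝒫₀) :
    ∫ ω, (g (Y ω) : ℝ) * (φ (Z ω) - upperExpectation 𝒫₀ fun ω => φ (Z ω)) ∂P ≤ 0 := by
  set c := upperExpectation 𝒫₀ fun ω => φ (Z ω)
  have hφc (x : ℝ) : |φ x - c| ≤ M + |c| := (abs_sub _ _).trans (by linarith [hM x])
  let ψ : E × ℝ → ℝ := fun p => (g p.1 : ℝ) * (φ p.2 - c)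
  have hψ_bound (p : E × ℝ) : |ψ p| ≤ M + |c| := by
    rw [abs_mul, NNReal.abs_eq]
    exact (mul_le_of_le_one_left (abs_nonneg _) (by exact_mod_cast hg1 p.1)).trans (hφc p.2)
  have hψ_lip : LipschitzWith _ ψ :=
    ((NNReal.isometry_coe.lipschitz.comp hg).comp LipschitzWith.prod_fst).mul_of_norm_le
      ((hφ.sub (LipschitzWith.const c)).comp LipschitzWith.prod_snd) (A := 1) (B := M + |c|)
      (fun p => by simpa using hg1 p.1) (fun p => hφc p.2)
  have hsection (y : E) : upperExpectation 𝒫₀ (fun ω' => ψ (y, Z ω')) ≤ 0 :=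
    Real.iSup_nonpos fun Q => Real.iSup_nonpos fun hQ => by
      have := h𝒫₀ Q hQ
      have hφZ : Integrable (fun ω => φ (Z ω)) Q :=
        .of_bound (hφ.continuous.measurable.comp hZ).aestronglyMeasurable M
          (ae_of_all _ fun _ => hM _)
      calc ∫ ω', ψ (y, Z ω') ∂Q = g y * ((∫ ω', φ (Z ω') ∂Q) - c) := by
            change ∫ ω', (g y : ℝ) * (φ (Z ω') - c) ∂Q = _
            rw [integral_const_mul, integral_sub hφZ (integrable_const c), integral_const,
              probReal_univ, one_smul]
        _ ≤ 0 := mul_nonpos_of_nonneg_of_nonpos (g y).2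
            (sub_nonpos.2 (integral_le_upperExpectation h𝒫₀ (fun _ => hM _) hQ))
  exact integral_nonpos_of_upperExpectation_section_nonpos h𝒫₀ hψ_bound
    (hindep ψ ⟨_, hψ_lip⟩ ⟨_, hψ_bound⟩) hsection hP

theorem condExp_comap_le_upperExpectation_of_indep [MeasurableSpace E] [BorelSpace E]
    (hY : Measurable Y) {P : Measure Ω} (hP : P ∈ 𝒫₀) :
    P[fun ω => φ (Z ω) | MeasurableSpace.comap Y inferInstance]
      ≤ᵐ[P] fun _ => upperExpectation 𝒫₀ fun ω => φ (Z ω) := by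
  have := h𝒫₀ P hP
  exact condExp_comap_le_of_forall_lipschitz hY
    (.of_bound (hφ.continuous.measurable.comp hZ).aestronglyMeasurable M
      (ae_of_all _ fun _ => hM _)) fun g ⟨_, hg⟩ hg1 =>
    integral_mul_sub_upperExpectation_nonpos h𝒫₀ hZ hindep hφ hM hg hg1 hP

end UpperExpectation

end MeasureTheory

theorem stmt19_general {Ω : Type*} [MeasurableSpace Ω] (𝒫₀ : Set (Measure Ω))
    (hP : ∀ P ∈ 𝒫₀, IsProbabilityMeasure P)
    (X : ℕ → Ω → ℝ) (hXm : ∀ n, Measurable (X n))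
    (hindep : ∀ n : ℕ, 1 ≤ n → ∀ φ : ((Fin (n-1) → ℝ) × ℝ) → ℝ,
      (∃ K, LipschitzWith K φ) → (∃ M, ∀ p, |φ p| ≤ M) →
      (⨆ P ∈ 𝒫₀, ∫ ω, φ (fun i => X (i+1) ω, X n ω) ∂P)
        = ⨆ P ∈ 𝒫₀, ∫ ω, (⨆ Q ∈ 𝒫₀, ∫ ω', φ (fun i => X (i+1) ω, X n ω') ∂Q) ∂P) :
    ∀ P ∈ 𝒫₀, ∀ n : ℕ, 1 ≤ n → ∀ φ : ℝ → ℝ,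
      (∃ K, LipschitzWith K φ) → (∃ M, ∀ x, |φ x| ≤ M) →
      ∀ᵐ ω ∂P,
        (P[fun ω' => φ (X n ω') |
            ⨆ i ∈ Finset.Icc 1 (n-1), MeasurableSpace.comap (X i) inferInstance]) ω
          ≤ ⨆ Q ∈ 𝒫₀, ∫ ω', φ (X n ω') ∂Q := by
  rintro P hPmem n hn φ ⟨Kφ, hφ⟩ ⟨M, hM⟩
  rw [iSup_mem_Icc_one_eq_iSup_fin (fun i => MeasurableSpace.comap (X i) inferInstance),
    ← MeasurableSpace.comap_pi_eq_iSup fun (i : Fin (n - 1)) => X (i + 1)]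
  exact condExp_comap_le_upperExpectation_of_indep hP (hXm n) (hindep n hn) hφ hM
    (measurable_pi_lambda _ fun i => hXm _) hPmem

theorem stmt19 {Ω : Type*} [MeasurableSpace Ω] (𝒫₀ : Set (Measure Ω)) (hne : 𝒫₀.Nonempty)
    (hP : ∀ P ∈ 𝒫₀, IsProbabilityMeasure P)
    (X : ℕ → Ω → ℝ) (hXm : ∀ n, Measurable (X n))
    (hindep : ∀ n : ℕ, 1 ≤ n → ∀ φ : ((Fin (n-1) → ℝ) × ℝ) → ℝ,
      (∃ K, LipschitzWith K φ) → (∃ M, ∀ p, |φ p| ≤ M) →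
      (⨆ P ∈ 𝒫₀, ∫ ω, φ (fun i => X (i+1) ω, X n ω) ∂P)
        = ⨆ P ∈ 𝒫₀, ∫ ω, (⨆ Q ∈ 𝒫₀, ∫ ω', φ (fun i => X (i+1) ω, X n ω') ∂Q) ∂P) :
    ∀ P ∈ 𝒫₀, ∀ n : ℕ, 1 ≤ n → ∀ φ : ℝ → ℝ,
      (∃ K, LipschitzWith K φ) → (∃ M, ∀ x, |φ x| ≤ M) →
      ∀ᵐ ω ∂P,
        (P[fun ω' => φ (X n ω') |
            ⨆ i ∈ Finset.Icc 1 (n-1), MeasurableSpace.comap (X i) inferInstance]) ω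
          ≤ ⨆ Q ∈ 𝒫₀, ∫ ω', φ (X n ω') ∂Q :=
  stmt19_general 𝒫₀ hP X hXm hindep
end
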